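/- arXiv:1510.01571 — 4 statements merged into one kernel-verified Lean document; each statement's English description precedes it below -/
import Mathlib

section
/- Let (X, dist) be a metric space and let f : X → ℝ be a positive 1-Lipschitz function. Then ρ(z,w) = log( (f(z) + f(w) + dist(z,w)) / (2·√(f(z)·f(w))) ) is a distance on X: ρ is symmetric, nonnegative, ρ(z,w) = 0 if and only if z = w, and ρ satisfies the triangle inequality ρ(z,w) ≤ ρ(z,u) + ρ(u,w) for all z, u, w ∈ X. -/
noncomputable section

open Metric Set MeasureTheory

/-- The distance from a point to the boundary of `D`. -/
def distBd {E : Type*} [NormedAddCommGroup E] [NormedSpace ℝ E]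
    (D : Set E) (z : E) : ℝ := Metric.infDist z (frontier D)

/-- The quasi-hyperbolic distance `h_D(z,w) = inf_γ ∫_γ |du| / d_D(u)`, the infimum being
taken over all rectifiable (equivalently, Lipschitz) curves in `D` joining `z` to `w`. -/
def qhDist {E : Type*} [NormedAddCommGroup E] [NormedSpace ℝ E]
    (D : Set E) (z w : E) : ℝ :=
  sInf {r : ℝ | ∃ γ : ℝ → E, (∃ K : NNReal, LipschitzOnWith K γ (Set.Icc 0 1)) ∧
    γ 0 = z ∧ γ 1 = w ∧ (∀ t ∈ Set.Icc (0:ℝ) 1, γ t ∈ D) ∧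
    r = ∫ t in (0:ℝ)..(1:ℝ), ‖deriv γ t‖ / distBd D (γ t)}

/-- `v^c_D(z,w) = 2 log (1 + c |z-w| / √(d_D(z) d_D(w)))`. -/
def vDist {E : Type*} [NormedAddCommGroup E] [NormedSpace ℝ E]
    (c : ℝ) (D : Set E) (z w : E) : ℝ :=
  2 * Real.log (1 + c * dist z w / Real.sqrt (distBd D z * distBd D w))

/-- `s_D(z,w) = 2 arsinh (|z-w| / (2 √(d_D(z) d_D(w))))`. -/
def sDist {E : Type*} [NormedAddCommGroup E] [NormedSpace ℝ E]
    (D : Set E) (z w : E) : ℝ :=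
  2 * Real.arsinh (dist z w / (2 * Real.sqrt (distBd D z * distBd D w)))

/-- `i_D(z,w) = 2 log ((d_D(z) + d_D(w) + |z-w|) / (2 √(d_D(z) d_D(w))))`. -/
def iDist {E : Type*} [NormedAddCommGroup E] [NormedSpace ℝ E]
    (D : Set E) (z w : E) : ℝ :=
  2 * Real.log ((distBd D z + distBd D w + dist z w) /
    (2 * Real.sqrt (distBd D z * distBd D w)))

/-- The inverse hyperbolic tangent. -/
def artanh (x : ℝ) : ℝ := (1/2) * Real.log ((1 + x) / (1 - x))

/-- The Lempert function of a domain `D` in a complex normed space. -/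
def lempert {F : Type*} [NormedAddCommGroup F] [NormedSpace ℂ F]
    (D : Set F) (z w : F) : ℝ :=
  sInf {r : ℝ | ∃ (α : ℂ) (φ : ℂ → F), ‖α‖ < 1 ∧
    DifferentiableOn ℂ φ (Metric.ball (0:ℂ) 1) ∧ Set.MapsTo φ (Metric.ball (0:ℂ) 1) D ∧
    φ 0 = z ∧ φ α = w ∧ r = artanh ‖α‖}

/-- The Kobayashi pseudodistance: the largest pseudodistance not exceeding the Lempert
function, i.e. the infimum over finite chains of sums of values of the Lempert function. -/
def kobayashi {F : Type*} [NormedAddCommGroup F] [NormedSpace ℂ F]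
    (D : Set F) (z w : F) : ℝ :=
  sInf {r : ℝ | ∃ (N : ℕ) (p : ℕ → F), p 0 = z ∧ p N = w ∧ (∀ j ≤ N, p j ∈ D) ∧
    r = ∑ j ∈ Finset.range N, lempert D (p j) (p (j+1))}

/-- `a` is a `C¹`-smooth boundary point of `D`: after an affine orthonormal change of
coordinates (encoded by a unit vector `ν` giving the first coordinate `⟪x, ν⟫`), near `a`
the domain is the region above the graph of a `C¹` function `f` of the remaining
coordinates (`f` does not depend on the coordinate along `ν`). -/
def IsC1BoundaryPoint {H : Type*} [NormedAddCommGroup H] [InnerProductSpace ℝ H]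
    (D : Set H) (a : H) : Prop :=
  a ∈ frontier D ∧ ∃ (ν : H) (f : H → ℝ) (V : Set H),
    ‖ν‖ = 1 ∧ IsOpen V ∧ a ∈ V ∧ ContDiff ℝ 1 f ∧
    (∀ (x : H) (t : ℝ), f (x + t • ν) = f x) ∧
    D ∩ V = {x | x ∈ V ∧ f x < (inner ℝ x ν : ℝ)}

/-- `a` is a Dini-smooth boundary point of `D`: a `C¹`-smooth boundary point whose local
graphing function has a Dini-continuous derivative (equivalently, the inner unit normal
is Dini-continuous near `a`): the modulus of continuity `ω` of the derivative satisfies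
`∫₀¹ ω(t)/t dt < +∞`. -/
def IsDiniSmoothBoundaryPoint {H : Type*} [NormedAddCommGroup H] [InnerProductSpace ℝ H]
    (D : Set H) (a : H) : Prop :=
  a ∈ frontier D ∧ ∃ (ν : H) (f : H → ℝ) (V : Set H) (ω : ℝ → ℝ),
    ‖ν‖ = 1 ∧ IsOpen V ∧ a ∈ V ∧ ContDiff ℝ 1 f ∧
    (∀ (x : H) (t : ℝ), f (x + t • ν) = f x) ∧
    D ∩ V = {x | x ∈ V ∧ f x < (inner ℝ x ν : ℝ)} ∧
    (∀ t : ℝ, 0 ≤ ω t) ∧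
    (∀ x ∈ V, ∀ y ∈ V, ‖fderiv ℝ f x - fderiv ℝ f y‖ ≤ ω (dist x y)) ∧
    MeasureTheory.IntegrableOn (fun t => ω t / t) (Set.Ioc (0:ℝ) 1)

/-- `a` is a `C^{1+ε}`-smooth boundary point of `D`: a `C¹`-smooth boundary point whose
local graphing function has an `ε`-Hölder continuous derivative. -/
def IsC1epsBoundaryPoint {H : Type*} [NormedAddCommGroup H] [InnerProductSpace ℝ H]
    (ε : ℝ) (D : Set H) (a : H) : Prop :=
  a ∈ frontier D ∧ ∃ (ν : H) (f : H → ℝ) (V : Set H) (C : ℝ),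
    ‖ν‖ = 1 ∧ IsOpen V ∧ a ∈ V ∧ ContDiff ℝ 1 f ∧
    (∀ (x : H) (t : ℝ), f (x + t • ν) = f x) ∧
    D ∩ V = {x | x ∈ V ∧ f x < (inner ℝ x ν : ℝ)} ∧
    (∀ x ∈ V, ∀ y ∈ V, ‖fderiv ℝ f x - fderiv ℝ f y‖ ≤ C * dist x y ^ ε)

/-!
Write `ρ = log q` with `q = iRatio f`. By AM–GM, `2 √(f z f w) ≤ f z + f w`, so `q ≥ 1`,
with equality only when `dist z w = 0`. The triangle inequality becomes `q z w ≤ q z u * q u w`. Since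
`√(f z f u) √(f u f w) = f u √(f z f w)`, clearing denominators reduces it to
`(f z + f w + dist z w) · 2 f u ≤ (x + f u) (y + f u)` with `x = f z + dist z u`,
`y = f w + dist u w`; as `dist z w ≤ x + y - f z - f w`, the difference is at least
`(x - f u) (y - f u)`, and both factors are nonnegative because `f` is `1`-Lipschitz.
-/

lemma two_mul_sqrt_mul_le_add {a b : ℝ} (ha : 0 ≤ a) (hb : 0 ≤ b) : 2 * √(a * b) ≤ a + b := by
  rw [Real.sqrt_mul ha]
  nlinarith [sq_nonneg (√a - √b), Real.sq_sqrt ha, Real.sq_sqrt hb]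

lemma sqrt_mul_mul_sqrt_mul {a b : ℝ} (ha : 0 ≤ a) (hb : 0 ≤ b) (c : ℝ) :
    √(a * b) * √(b * c) = b * √(a * c) := by
  rw [← Real.sqrt_mul (mul_nonneg ha hb), show a * b * (b * c) = b ^ 2 * (a * c) by ring,
    Real.sqrt_mul (sq_nonneg b), Real.sqrt_sq hb]

/-- With `f = distBd D` this is the quantity whose logarithm is `iDist D / 2`. -/
def iRatio {X : Type*} [PseudoMetricSpace X] (f : X → ℝ) (z w : X) : ℝ :=
  (f z + f w + dist z w) / (2 * √(f z * f w))

section iRatio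

variable {X : Type*} [PseudoMetricSpace X] {f : X → ℝ}

lemma iRatio_comm (f : X → ℝ) (z w : X) : iRatio f z w = iRatio f w z := by
  rw [iRatio, iRatio, dist_comm, mul_comm (f z), add_comm (f z)]

lemma one_le_iRatio (hpos : ∀ x, 0 < f x) (z w : X) : 1 ≤ iRatio f z w := by
  have hden : 0 < 2 * √(f z * f w) := by have := mul_pos (hpos z) (hpos w); positivity
  rw [iRatio, one_le_div hden]
  linarith [two_mul_sqrt_mul_le_add (hpos z).le (hpos w).le, dist_nonneg (x := z) (y := w)]

lemma iRatio_self (hpos : ∀ x, 0 < f x) (z : X) : iRatio f z z = 1 := by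
  have := hpos z
  rw [iRatio, dist_self, Real.sqrt_mul_self this.le, div_eq_one_iff_eq (by positivity)]
  ring

lemma dist_eq_zero_of_iRatio_eq_one (hpos : ∀ x, 0 < f x) {z w : X} (h : iRatio f z w = 1) :
    dist z w = 0 := by
  have hden : 0 < 2 * √(f z * f w) := by have := mul_pos (hpos z) (hpos w); positivity
  rw [iRatio, div_eq_one_iff_eq hden.ne'] at h
  linarith [two_mul_sqrt_mul_le_add (hpos z).le (hpos w).le, dist_nonneg (x := z) (y := w)]

lemma iRatio_le_mul (hpos : ∀ x, 0 < f x) (hlip : ∀ x y, |f x - f y| ≤ dist x y) (z u w : X) :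
    iRatio f z w ≤ iRatio f z u * iRatio f u w := by
  have hz := hpos z; have hu := hpos u; have hw := hpos w
  have hzu : f u ≤ f z + dist z u := by
    linarith [(abs_le.mp (hlip u z)).2, dist_comm z u]
  have huw : f u ≤ f w + dist u w := by linarith [(abs_le.mp (hlip u w)).2]
  have hnum : (f z + f w + dist z w) * (2 * f u) ≤
      (f z + f u + dist z u) * (f u + f w + dist u w) := by
    nlinarith [mul_nonneg (sub_nonneg.mpr hzu) (sub_nonneg.mpr huw), dist_triangle z u w]
  have hden : 2 * √(f z * f u) * (2 * √(f u * f w)) = 2 * √(f z * f w) * (2 * f u) := by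
    linear_combination 4 * sqrt_mul_mul_sqrt_mul hz.le hu.le (f w)
  rw [iRatio, iRatio, iRatio, div_mul_div_comm, hden,
    ← mul_div_mul_right _ _ (by positivity : 2 * f u ≠ 0)]
  gcongr

end iRatio

lemma iRatio_eq_one_iff {X : Type*} [MetricSpace X] {f : X → ℝ} (hpos : ∀ x, 0 < f x)
    {z w : X} : iRatio f z w = 1 ↔ z = w :=
  ⟨fun h => dist_eq_zero.mp (dist_eq_zero_of_iRatio_eq_one hpos h),
    fun h => h ▸ iRatio_self hpos z⟩

/-- Let `X` be a metric space and `f : X → ℝ` a positive `1`-Lipschitz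
function. Then `ρ(z,w) = log((f z + f w + dist z w) / (2 √(f z · f w)))` is a distance on
`X`: symmetric, nonnegative, vanishing exactly on the diagonal, and satisfying the
triangle inequality. -/
theorem statement11 {X : Type*} [MetricSpace X] (f : X → ℝ)
    (hpos : ∀ x, 0 < f x) (hlip : ∀ x y, |f x - f y| ≤ dist x y)
    (ρ : X → X → ℝ)
    (hρ : ∀ z w, ρ z w = Real.log ((f z + f w + dist z w) / (2 * Real.sqrt (f z * f w)))) :
    (∀ z w, ρ z w = ρ w z) ∧
    (∀ z w, 0 ≤ ρ z w) ∧
    (∀ z w, ρ z w = 0 ↔ z = w) ∧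
    (∀ z u w, ρ z w ≤ ρ z u + ρ u w) := by
  have hρq : ∀ z w, ρ z w = Real.log (iRatio f z w) := hρ
  have hq_pos : ∀ z w, 0 < iRatio f z w := fun z w => one_pos.trans_le (one_le_iRatio hpos z w)
  refine ⟨fun z w => by rw [hρq, hρq, iRatio_comm],
    fun z w => by rw [hρq]; exact Real.log_nonneg (one_le_iRatio hpos z w), fun z w => ?_,
    fun z u w => ?_⟩
  · rw [hρq, Real.log_eq_zero, iRatio_eq_one_iff hpos]
    have := hq_pos z w
    constructor
    · rintro (h | h | h) <;> first | exact h | linarith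
    · exact fun h => Or.inr (Or.inl h)
  · rw [hρq, hρq, hρq, ← Real.log_mul (hq_pos z u).ne' (hq_pos u w).ne']
    exact Real.log_le_log (hq_pos z w) (iRatio_le_mul hpos hlip z u w)
end
end

section
/- If D is a proper subdomain of ℝⁿ, then for all z, w ∈ D one has v^{1/2}_D(z,w) ≤ i_D(z,w) ≤ s_D(z,w) ≤ v^1_D(z,w), i.e. 2·log(1 + |z−w|/(2·√(d_D(z)·d_D(w)))) ≤ 2·log( (d_D(z)+d_D(w)+|z−w|) / (2·√(d_D(z)·d_D(w))) ) ≤ 2·arsinh( |z−w| / (2·√(d_D(z)·d_D(w))) ) ≤ 2·log(1 + |z−w|/√(d_D(z)·d_D(w))). -/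
noncomputable section

open Metric Set MeasureTheory

/-!
Put `g = √(d_D(z) d_D(w))`, `x = |z-w| / (2g)` and `s = (d_D(z) + d_D(w)) / (2g)`. Then
`v^{1/2} = 2 log (1 + x)`, `i = 2 log (s + x)`, `s_D = 2 log (x + √(1 + x²))` and
`v^1 = 2 log (1 + 2x)`, so the chain reduces to `1 ≤ s ≤ √(1 + x²) ≤ 1 + x`.
The first inequality is AM-GM; the second is `(d_D(z) - d_D(w))² ≤ |z-w|²`, i.e. that
`d_D` is `1`-Lipschitz.
-/

namespace Real

lemma sqrt_one_add_sq_le_one_add {x : ℝ} (hx : 0 ≤ x) : √(1 + x ^ 2) ≤ 1 + x :=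
  sqrt_le_iff.2 ⟨by positivity, by nlinarith⟩

lemma arsinh_le_log_one_add_two_mul {x : ℝ} (hx : 0 ≤ x) : arsinh x ≤ log (1 + 2 * x) := by
  have := sqrt_one_add_sq_le_one_add hx
  exact log_le_log (by positivity) (by linarith)

lemma log_add_le_arsinh {s x : ℝ} (hs : 0 < s) (hx : 0 ≤ x) (h : s ^ 2 ≤ 1 + x ^ 2) :
    log (s + x) ≤ arsinh x := by
  have : s ≤ √(1 + x ^ 2) := le_sqrt_of_sq_le h
  exact log_le_log (by positivity) (by linarith)

lemma one_le_add_div_two_sqrt_mul {a b : ℝ} (ha : 0 < a) (hb : 0 < b) :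
    1 ≤ (a + b) / (2 * √(a * b)) := by
  have hg : √(a * b) ^ 2 = a * b := sq_sqrt (by positivity)
  rw [one_le_div (by positivity)]
  nlinarith [sq_nonneg (a + b - 2 * √(a * b)), sq_nonneg (a - b), sqrt_nonneg (a * b)]

lemma add_div_two_sqrt_mul_sq_le {a b r : ℝ} (ha : 0 < a) (hb : 0 < b) (h : |a - b| ≤ r) :
    ((a + b) / (2 * √(a * b))) ^ 2 ≤ 1 + (r / (2 * √(a * b))) ^ 2 := by
  have hg : √(a * b) ^ 2 = a * b := sq_sqrt (by positivity)
  have hgpos : 0 < √(a * b) := sqrt_pos.2 (by positivity)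
  have hr : (a - b) ^ 2 ≤ r ^ 2 := sq_le_sq' (abs_le.1 h).1 (abs_le.1 h).2
  rw [div_pow, div_pow, one_add_div (by positivity), div_le_div_iff_of_pos_right (by positivity)]
  nlinarith

end Real

section DistBd

variable {E : Type*} [NormedAddCommGroup E] [NormedSpace ℝ E] {D : Set E} {z w : E}

lemma abs_distBd_sub_distBd_le : |distBd D z - distBd D w| ≤ dist z w := by
  simpa [distBd, Real.dist_eq] using (lipschitz_infDist_pt (frontier D)).dist_le_mul z w

lemma distBd_pos (hD : IsOpen D) (hne : D ≠ univ) (hz : z ∈ D) : 0 < distBd D z := by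
  have hfr : (frontier D).Nonempty := nonempty_frontier_iff.2 ⟨⟨z, hz⟩, hne⟩
  refine (isClosed_frontier.notMem_iff_infDist_pos hfr).1 fun h ↦ h.2 ?_
  rwa [hD.interior_eq]

lemma vDist_half_le_iDist (hz : 0 < distBd D z) (hw : 0 < distBd D w) :
    vDist (1 / 2) D z w ≤ iDist D z w := by
  unfold vDist iDist
  rw [add_div, show 1 / 2 * dist z w / √(distBd D z * distBd D w) =
    dist z w / (2 * √(distBd D z * distBd D w)) by ring]
  gcongr
  exact Real.one_le_add_div_two_sqrt_mul hz hw

lemma iDist_le_sDist (hz : 0 < distBd D z) (hw : 0 < distBd D w) :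
    iDist D z w ≤ sDist D z w := by
  unfold iDist sDist
  rw [add_div]
  gcongr
  exact Real.log_add_le_arsinh (by linarith [Real.one_le_add_div_two_sqrt_mul hz hw])
    (by positivity) (Real.add_div_two_sqrt_mul_sq_le hz hw abs_distBd_sub_distBd_le)

lemma sDist_le_vDist_one (D : Set E) (z w : E) : sDist D z w ≤ vDist 1 D z w := by
  unfold sDist vDist
  set g := √(distBd D z * distBd D w)
  rw [show 1 * dist z w / g = 2 * (dist z w / (2 * g)) by
    rw [one_mul, mul_div_assoc', mul_div_mul_left _ _ two_ne_zero]]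
  gcongr
  exact Real.arsinh_le_log_one_add_two_mul (by positivity)

end DistBd

theorem statement12_general {n : ℕ} (D : Set (EuclideanSpace ℝ (Fin n)))
    (hDopen : IsOpen D) (hDproper : D ≠ Set.univ) :
    ∀ z ∈ D, ∀ w ∈ D,
      vDist (1/2) D z w ≤ iDist D z w ∧ iDist D z w ≤ sDist D z w ∧
        sDist D z w ≤ vDist 1 D z w := by
  intro z hz w hw
  have hz' := distBd_pos hDopen hDproper hz
  have hw' := distBd_pos hDopen hDproper hw
  exact ⟨vDist_half_le_iDist hz' hw', iDist_le_sDist hz' hw', sDist_le_vDist_one D z w⟩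

/-- If `D` is a proper subdomain of `ℝⁿ`, then for all `z, w ∈ D` one has
`v^{1/2}_D(z,w) ≤ i_D(z,w) ≤ s_D(z,w) ≤ v^1_D(z,w)`. -/
theorem statement12 {n : ℕ} (D : Set (EuclideanSpace ℝ (Fin n)))
    (hDopen : IsOpen D) (hDconn : IsConnected D) (hDproper : D ≠ Set.univ) :
    ∀ z ∈ D, ∀ w ∈ D,
      vDist (1/2) D z w ≤ iDist D z w ∧ iDist D z w ≤ sDist D z w ∧
        sDist D z w ≤ vDist 1 D z w :=
  statement12_general D hDopen hDproper
end
end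

section
/- Let c₂ ≥ √2/2 be a real number and let γ > 0 and δ > 0 satisfy δ < γ + 1. Then (c₂ + γ)(c₂ + δ)·(2c₂ + 1 + γ + δ)/(2c₂ − 1 + γ + δ) < (γ + c₂ + 1)². -/
noncomputable section

open Metric Set MeasureTheory

/-! Clearing the positive denominator, the difference of the two sides factors as
`(γ + 1 - δ) * ((c₂ + γ) * (γ + 2 c₂ + δ) - 1)`: it vanishes at `δ = γ + 1` and is quadratic in
`δ` with leading coefficient `-(c₂ + γ)`. The first factor is positive because `δ < γ + 1`, the
second because `(c₂ + γ)(γ + 2 c₂ + δ) > 2 c₂² ≥ 1`. -/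

theorem sq_mul_sub_mul_mul_eq_mul (c γ δ : ℝ) :
    (γ + c + 1) ^ 2 * (2 * c - 1 + γ + δ) - (c + γ) * (c + δ) * (2 * c + 1 + γ + δ)
      = (γ + 1 - δ) * ((c + γ) * (γ + 2 * c + δ) - 1) := by
  ring

theorem one_le_two_mul_sq_of_sqrt_two_div_two_le {c : ℝ} (hc : Real.sqrt 2 / 2 ≤ c) :
    1 ≤ 2 * c ^ 2 := by
  have h : (Real.sqrt 2 / 2) ^ 2 ≤ c ^ 2 := pow_le_pow_left₀ (by positivity) hc 2
  rw [div_pow, Real.sq_sqrt zero_le_two] at h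
  linarith

/-- Let `c₂ ≥ √2/2` and let `γ, δ > 0` satisfy `δ < γ + 1`. Then
`(c₂+γ)(c₂+δ)(2c₂+1+γ+δ)/(2c₂−1+γ+δ) < (γ+c₂+1)²`. -/
theorem statement17 (c₂ γ δ : ℝ) (hc : Real.sqrt 2 / 2 ≤ c₂)
    (hγ : 0 < γ) (hδ : 0 < δ) (hδγ : δ < γ + 1) :
    (c₂ + γ) * (c₂ + δ) * (2 * c₂ + 1 + γ + δ) / (2 * c₂ - 1 + γ + δ)
      < (γ + c₂ + 1) ^ 2 := by
  have hc₀ : 0 < c₂ := lt_of_lt_of_le (by positivity) hc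
  have hc₂ : 1 ≤ 2 * c₂ ^ 2 := one_le_two_mul_sq_of_sqrt_two_div_two_le hc
  have hden : 0 < 2 * c₂ - 1 + γ + δ := by nlinarith
  have hfactor : 1 < (c₂ + γ) * (γ + 2 * c₂ + δ) := by nlinarith
  rw [div_lt_iff₀ hden, ← sub_pos, sq_mul_sub_mul_mul_eq_mul]
  exact mul_pos (by linarith) (by linarith)
end
end

section
/- Consider the function F(t) = max{ t·√((2t+1)/(2t−1)), t + 1 } for real t > 1/2. Then the infimum of F over (1/2, ∞) equals c₀ = 1 + √2/2, the infimum is attained, and it is attained exactly at t = √2/2. -/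
noncomputable section

open Metric Set MeasureTheory

/-!
To the right of `√2/2` the branch `t + 1` alone exceeds `c₀ = √2/2 + 1`; at `t = √2/2` both
branches equal `c₀`, because `(√2 + 1)/(√2 - 1) = (1 + √2)²`; to the left of `√2/2` the first
branch exceeds `c₀`, which after squaring is a cubic inequality vanishing at `√2/2`.
-/

theorem isLeast_max_add_one_of_lt_left {g : ℝ → ℝ} {a t₀ : ℝ} (ha : a < t₀)
    (hg₀ : g t₀ ≤ t₀ + 1) (hg : ∀ t, a < t → t < t₀ → t₀ + 1 < g t) :
    IsLeast ((fun t => max (g t) (t + 1)) '' Ioi a) (t₀ + 1) ∧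
      ∀ t, a < t → (max (g t) (t + 1) = t₀ + 1 ↔ t = t₀) := by
  have hlower : ∀ t, a < t → t ≠ t₀ → t₀ + 1 < max (g t) (t + 1) := by
    intro t hat hne
    rcases hne.lt_or_gt with hlt | hgt
    · exact lt_max_of_lt_left (hg t hat hlt)
    · exact lt_max_of_lt_right (by linarith)
  have hmin : max (g t₀) (t₀ + 1) = t₀ + 1 := max_eq_right hg₀
  refine ⟨⟨⟨t₀, ha, hmin⟩, ?_⟩, fun t hat => ⟨fun h => ?_, fun h => h ▸ hmin⟩⟩
  · rintro _ ⟨t, hat, rfl⟩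
    rcases eq_or_ne t t₀ with rfl | hne
    · exact hmin.ge
    · exact (hlower t hat hne).le
  · by_contra hne
    exact (hlower t hat hne).ne' h

theorem sqrt_two_add_one_div_sub_one_eq_sq :
    (2 * (√2 / 2) + 1) / (2 * (√2 / 2) - 1) = (1 + √2) ^ 2 := by
  have hs : √2 ^ 2 = 2 := Real.sq_sqrt zero_le_two
  have hs1 : 1 < √2 := Real.one_lt_sqrt_two
  rw [div_eq_iff (by linarith)]
  nlinarith

theorem mul_sqrt_at_sqrt_two_div_two :
    √2 / 2 * √((2 * (√2 / 2) + 1) / (2 * (√2 / 2) - 1)) = √2 / 2 + 1 := by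
  have hs : √2 ^ 2 = 2 := Real.sq_sqrt zero_le_two
  rw [sqrt_two_add_one_div_sub_one_eq_sq, Real.sqrt_sq (by positivity)]
  linear_combination hs / 2

/-- With `s = √2`, `t² (2t+1) - (s/2+1)² (2t-1) = (s/2 - t) (2 + 3s/2 - 2t² - (1+s) t)`,
and both factors are positive on `(1/2, s/2)`. -/
theorem sq_mul_lt_sq_mul_of_lt_sqrt_two_div_two {t : ℝ} (ht : 1 / 2 < t) (ht' : t < √2 / 2) :
    (√2 / 2 + 1) ^ 2 * (2 * t - 1) < (2 * t + 1) * t ^ 2 := by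
  have hs : √2 ^ 2 = 2 := Real.sq_sqrt zero_le_two
  have hs1 : 1 < √2 := Real.one_lt_sqrt_two
  have hfactor : 0 < 2 + 3 * √2 / 2 - (2 * t ^ 2 + (1 + √2) * t) := by nlinarith
  nlinarith [mul_pos (sub_pos.2 ht') hfactor]

theorem sqrt_two_div_two_add_one_lt_mul_sqrt {t : ℝ} (ht : 1 / 2 < t) (ht' : t < √2 / 2) :
    √2 / 2 + 1 < t * √((2 * t + 1) / (2 * t - 1)) := by
  have ht0 : 0 < t := by linarith
  have hsq : ((√2 / 2 + 1) / t) ^ 2 < (2 * t + 1) / (2 * t - 1) := by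
    rw [div_pow, div_lt_div_iff₀ (by positivity) (by linarith)]
    exact sq_mul_lt_sq_mul_of_lt_sqrt_two_div_two ht ht'
  calc √2 / 2 + 1 = t * ((√2 / 2 + 1) / t) := by field_simp
    _ < t * √((2 * t + 1) / (2 * t - 1)) :=
      mul_lt_mul_of_pos_left ((Real.lt_sqrt (by positivity)).2 hsq) ht0

/-- For `F(t) = max { t √((2t+1)/(2t−1)), t + 1 }` on `(1/2, ∞)`, the
infimum of `F` equals `c₀ = 1 + √2/2`, it is attained, and it is attained exactly at
`t = √2/2`. -/
theorem statement18 :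
    IsLeast
      ((fun t : ℝ => max (t * Real.sqrt ((2 * t + 1) / (2 * t - 1))) (t + 1)) ''
        Set.Ioi (1/2 : ℝ))
      (1 + Real.sqrt 2 / 2) ∧
    (∀ t : ℝ, 1/2 < t →
      (max (t * Real.sqrt ((2 * t + 1) / (2 * t - 1))) (t + 1) = 1 + Real.sqrt 2 / 2 ↔
        t = Real.sqrt 2 / 2)) := by
  have hhalf : (1 / 2 : ℝ) < √2 / 2 := by linarith [Real.one_lt_sqrt_two]
  rw [add_comm 1]
  exact isLeast_max_add_one_of_lt_left hhalf mul_sqrt_at_sqrt_two_div_two.le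
    fun t ht ht' => sqrt_two_div_two_add_one_lt_mul_sqrt ht ht'
end
end
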